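/- Let r > 0 and define the entire function B_r : ℂ → ℂ by B_r(z) = √r·∑_{k∈ℤ} exp(−π·(rk)² + 2π·z·(rk) − (π/2)·z²) (the Bargmann transform of the Dirac comb Ш_r). Then for every z ∈ ℂ and every w ∈ ℂ of the form w = r·j + i·k/r with j, k ∈ ℤ: exp(−π·|z − w|²)·|B_r(z − w)|² = exp(−π·|z|²)·|B_r(z)|². -/

import Mathlib

/-- The Bargmann transform of the Dirac comb `Ш_r`:
`B_r(z) = √r ∑_{k∈ℤ} exp(-π(rk)² + 2πz(rk) - (π/2)z²)`. -/
noncomputable def bargmannComb (r : ℝ) (z : ℂ) : ℂ :=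
  (Real.sqrt r : ℂ) * ∑' k : ℤ,
    Complex.exp (-(Real.pi : ℂ) * ((r * k : ℝ) : ℂ) ^ 2
      + 2 * (Real.pi : ℂ) * z * ((r * k : ℝ) : ℂ) - (Real.pi : ℂ) / 2 * z ^ 2)

/-!
Shifting `z` by `w = a + ib` multiplies the Bargmann kernel `exp(-πx² + 2πzx - (π/2)z²)` by a
factor `exp(c(w, z))` independent of `x`, moves the point `x` to `x + a`, and adds the phase
`exp(-2πibx)`. For `w = rj + ik/r` and `x ∈ rℤ` the move permutes the comb and the phase is `1`,
so `B_r(z - w) = exp(c(w, z)) B_r(z)`; and `2 Re c(w, z) = π|z - w|² - π|z|²` is exactly what the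
Gaussian weight compensates. No convergence is needed: reindexing a `tsum` by a bijection is
valid whether or not the series is summable.
-/

open Complex
open scoped Real

namespace BargmannComb

noncomputable def kernel (z : ℂ) (x : ℝ) : ℂ :=
  exp (-(π : ℂ) * (x : ℂ) ^ 2 + 2 * (π : ℂ) * z * (x : ℂ) - (π : ℂ) / 2 * z ^ 2)

noncomputable def shiftExponent (w z : ℂ) : ℂ :=
  π * (w.re : ℂ) ^ 2 - 2 * π * (w.re : ℂ) * z + π * w * z - π / 2 * w ^ 2

theorem bargmannComb_eq_tsum_kernel (r : ℝ) (z : ℂ) :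
    bargmannComb r z = (Real.sqrt r : ℂ) * ∑' k : ℤ, kernel z (r * k) :=
  rfl

theorem kernel_sub (w z : ℂ) (x : ℝ) :
    kernel (z - w) x =
      exp (shiftExponent w z) * kernel z (x + w.re) * exp (-(2 * π * I * w.im * x)) := by
  simp only [kernel, shiftExponent, ← Complex.exp_add]
  congr 1
  push_cast
  linear_combination (-2 * π * (x : ℂ)) * (re_add_im w).symm

theorem kernel_sub_lattice {r : ℝ} (hr : r ≠ 0) (j k n : ℤ) (z : ℂ) :
    kernel (z - ((r * j : ℝ) + I * ((k / r : ℝ) : ℂ))) (r * n) =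
      exp (shiftExponent ((r * j : ℝ) + I * ((k / r : ℝ) : ℂ)) z) * kernel z (r * (n + j : ℤ)) := by
  rw [kernel_sub]
  have hphase : -(2 * π * I * ((r * j : ℝ) + I * ((k / r : ℝ) : ℂ)).im * (r * n : ℝ)) =
      (-(k * n) : ℤ) * (2 * π * I) := by
    simp only [add_im, ofReal_im, mul_im, I_re, I_im, ofReal_re, zero_mul, one_mul, zero_add]
    have hr' : (r : ℂ) ≠ 0 := ofReal_ne_zero.mpr hr
    push_cast
    field_simp
  rw [hphase, Complex.exp_int_mul_two_pi_mul_I, mul_one]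
  congr 2
  simp only [add_re, ofReal_re, mul_re, I_re, I_im, ofReal_im, zero_mul, sub_zero, one_mul,
    add_zero]
  push_cast
  ring

theorem bargmannComb_sub_lattice {r : ℝ} (hr : r ≠ 0) (j k : ℤ) (z : ℂ) :
    bargmannComb r (z - ((r * j : ℝ) + I * ((k / r : ℝ) : ℂ))) =
      exp (shiftExponent ((r * j : ℝ) + I * ((k / r : ℝ) : ℂ)) z) * bargmannComb r z := by
  simp only [bargmannComb_eq_tsum_kernel, kernel_sub_lattice hr, tsum_mul_left]
  rw [show ∑' n : ℤ, kernel z (r * (n + j : ℤ)) = ∑' n : ℤ, kernel z (r * n) from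
    (Equiv.addRight j).tsum_eq fun m : ℤ => kernel z (r * m)]
  ring

theorem exp_neg_pi_norm_sub_sq_mul_norm_exp_shiftExponent_sq (w z : ℂ) :
    Real.exp (-π * ‖z - w‖ ^ 2) * ‖exp (shiftExponent w z)‖ ^ 2 = Real.exp (-π * ‖z‖ ^ 2) := by
  rw [Complex.norm_exp, ← Real.exp_nat_mul, ← Real.exp_add]
  congr 1
  rw [Complex.sq_norm, Complex.sq_norm]
  simp only [normSq_apply, shiftExponent, sub_re, sub_im, add_re, mul_re,
    div_re, ofReal_re, ofReal_im, pow_two]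
  norm_num
  ring

end BargmannComb

open BargmannComb in
/-- The Bargmann mass `e^{-π|z|²}|𝔅Ш_r(z)|²` is invariant under translations by the
lattice `rℤ + i(1/r)ℤ`. -/
theorem stmt13 (r : ℝ) (hr : 0 < r) (z : ℂ) (j k : ℤ) (w : ℂ)
    (hw : w = ((r * j : ℝ) : ℂ) + Complex.I * (((k : ℝ) / r : ℝ) : ℂ)) :
    Real.exp (-Real.pi * ‖z - w‖ ^ 2) * ‖bargmannComb r (z - w)‖ ^ 2
      = Real.exp (-Real.pi * ‖z‖ ^ 2) * ‖bargmannComb r z‖ ^ 2 := by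
  rw [hw, bargmannComb_sub_lattice hr.ne', norm_mul, mul_pow, ← mul_assoc, ← hw,
    exp_neg_pi_norm_sub_sq_mul_norm_exp_shiftExponent_sq]
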